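/- Let φ be infinitely differentiable with φ'(z) ≥ ρ1 and φ'''(z) ≥ ρ2 for all z ∈ ℝ, where ρ1, ρ2 > 0, satisfying β-normality with constant β > 0, and assume the coherence assumption with constant μ > 0. Let θ : [0, ∞) → ℝ^{md} be a Riemannian gradient-flow trajectory of G on the zero-loss set, and for each i let ν_i be the unique real number with φ(ν_i) = y_i / m. Then for every ε > 0 and every time t ≥ G(θ(0)) / (μ β²) + log(max(β² / (ρ1² ρ2² ε²), 1)) / (ρ1 ρ2 μ), one has |θ_j(t) · x_i − ν_i| ≤ ε for all i ∈ {1,…,n} and j ∈ {1,…,m}; i.e., every neuron's inner product with every data point is ε-close to that of the global optimum. -/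

import Mathlib

/-!
Along the flow, `G` decreases at rate `‖∇G‖²`, and on the zero-loss set it satisfies the
Polyak–Łojasiewicz-type inequality `μ · min(β², ρ1ρ2 (G - G⋆)) ≤ ‖∇G‖²` with
`G⋆ = ∑ i, m φ'(ν i)²`. To prove it, test `∇G` against a tangent vector built from the coherence
assumption; this reduces the bound, data point by data point, to a one-dimensional estimate on the
tilted function `φ'² - 2cφ`, in which β-normality keeps `φ'` from more than doubling. Hence
`G - G⋆` falls below `β²/(ρ1ρ2)` linearly by time `G(θ(0))/(μβ²)` and then decays exponentially
at rate `ρ1ρ2μ`. Finally `ρ1ρ2 (θ_j·x_i - ν_i)² ≤ G - G⋆`, by the same tilted function with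
`c = φ''(ν_i)`.
-/

open scoped RealInnerProductSpace
open Real Filter

noncomputable section

/-- The parameter space ℝ^{md}: m blocks θ_j ∈ ℝ^d, with the Euclidean norm. -/
abbrev Param (m d : ℕ) : Type := PiLp 2 (fun _ : Fin m => EuclideanSpace ℝ (Fin d))

instance paramCSMul (m d : ℕ) : ContinuousSMul ℝ (Param m d) := inferInstance

/-- Network output f_i(θ) = Σ_j φ(θ_j · x_i). -/
def netF {n m d : ℕ} (φ : ℝ → ℝ) (x : Fin n → EuclideanSpace ℝ (Fin d)) (i : Fin n)
    (θ : Param m d) : ℝ := ∑ j, φ ⟪θ j, x i⟫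

/-- Euclidean gradient Df_i(θ), with j-th block φ'(θ_j · x_i) x_i. -/
def gradF {n m d : ℕ} (φ : ℝ → ℝ) (x : Fin n → EuclideanSpace ℝ (Fin d)) (i : Fin n)
    (θ : Param m d) : Param m d := WithLp.toLp 2 (fun j => (deriv φ ⟪θ j, x i⟫) • x i)

/-- Implicit regularizer G(θ) = Σ_i Σ_j φ'(θ_j · x_i)². -/
def regG {n m d : ℕ} (φ : ℝ → ℝ) (x : Fin n → EuclideanSpace ℝ (Fin d))
    (θ : Param m d) : ℝ := ∑ i, ∑ j, (deriv φ ⟪θ j, x i⟫) ^ 2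

/-- Euclidean gradient DG(θ), with j-th block Σ_i 2 φ'(θ_j·x_i) φ''(θ_j·x_i) x_i. -/
def gradRegG {n m d : ℕ} (φ : ℝ → ℝ) (x : Fin n → EuclideanSpace ℝ (Fin d))
    (θ : Param m d) : Param m d :=
  WithLp.toLp 2 (fun j => ∑ i, (2 * deriv φ ⟪θ j, x i⟫ * deriv (deriv φ) ⟪θ j, x i⟫) • x i)

/-- Squared loss L(θ) = Σ_i (f_i(θ) − y_i)². -/
def lossL {n m d : ℕ} (φ : ℝ → ℝ) (x : Fin n → EuclideanSpace ℝ (Fin d)) (y : Fin n → ℝ)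
    (θ : Param m d) : ℝ := ∑ i, (netF φ x i θ - y i) ^ 2

/-- Jacobian Df(θ) : ℝ^{md} → ℝ^n, whose i-th row is Df_i(θ). -/
def jacobian {n m d : ℕ} (φ : ℝ → ℝ) (x : Fin n → EuclideanSpace ℝ (Fin d))
    (θ : Param m d) : Param m d →ₗ[ℝ] (Fin n → ℝ) :=
  LinearMap.pi fun i => (innerSL ℝ (gradF φ x i θ)).toLinearMap

/-- Riemannian gradient ∇G(θ): orthogonal projection of DG(θ) onto ker Df(θ). -/
def rgradG {n m d : ℕ} (φ : ℝ → ℝ) (x : Fin n → EuclideanSpace ℝ (Fin d))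
    (θ : Param m d) : Param m d :=
  ((LinearMap.ker (jacobian φ x θ)).orthogonalProjectionOnto (gradRegG φ x θ) : Param m d)

lemma mul_sq_le_sub_mul_sub_of_le_deriv {f : ℝ → ℝ} (hf : Differentiable ℝ f) {C : ℝ}
    (hC : ∀ x, C ≤ deriv f x) (x y : ℝ) : C * (y - x) ^ 2 ≤ (f y - f x) * (y - x) := by
  rcases le_total x y with hxy | hyx
  · nlinarith [mul_sub_le_image_sub_of_le_deriv hf hC hxy, sub_nonneg.2 hxy]
  · nlinarith [mul_sub_le_image_sub_of_le_deriv hf hC hyx, sub_nonneg.2 hyx]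

lemma mul_abs_sub_le_abs_sub_of_le_deriv {f : ℝ → ℝ} (hf : Differentiable ℝ f) {C : ℝ}
    (hC : ∀ x, C ≤ deriv f x) (x y : ℝ) : C * |y - x| ≤ |f y - f x| := by
  rcases le_total x y with hxy | hyx
  · rw [abs_of_nonneg (sub_nonneg.2 hxy)]
    exact (mul_sub_le_image_sub_of_le_deriv hf hC hxy).trans (le_abs_self _)
  · rw [abs_sub_comm, abs_of_nonneg (sub_nonneg.2 hyx), abs_sub_comm]
    exact (mul_sub_le_image_sub_of_le_deriv hf hC hyx).trans (le_abs_self _)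

lemma surjective_of_pos_le_deriv {f : ℝ → ℝ} (hf : Differentiable ℝ f) {C : ℝ} (hC : 0 < C)
    (hf' : ∀ x, C ≤ deriv f x) : Function.Surjective f := by
  refine hf.continuous.surjective ?_ ?_
  · refine tendsto_atTop_mono' _ ?_
      (tendsto_atTop_add_const_right _ (f 0) (tendsto_id.const_mul_atTop hC))
    filter_upwards [eventually_ge_atTop 0] with y hy
    have := mul_sub_le_image_sub_of_le_deriv hf hf' hy
    simp only [id, sub_zero] at this ⊢
    linarith
  · refine tendsto_atBot_mono' _ ?_
      (tendsto_atBot_add_const_right _ (f 0) (tendsto_id.const_mul_atBot hC))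
    filter_upwards [eventually_le_atBot 0] with y hy
    have := mul_sub_le_image_sub_of_le_deriv hf hf' hy
    simp only [id, zero_sub, mul_neg] at this ⊢
    linarith

lemma le_of_deriv_mul_sub_nonneg {f : ℝ → ℝ} (hf : Differentiable ℝ f) {c : ℝ}
    (h : ∀ s, 0 ≤ deriv f s * (s - c)) (a : ℝ) : f c ≤ f a := by
  rcases le_total c a with hca | hac
  · refine monotoneOn_of_deriv_nonneg (convex_Ici c) hf.continuous.continuousOn
      hf.differentiableOn (fun s hs => ?_) Set.self_mem_Ici hca hca
    rw [interior_Ici] at hs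
    exact nonneg_of_mul_nonneg_left (h s) (sub_pos.2 hs)
  · refine antitoneOn_of_deriv_nonpos (convex_Iic c) hf.continuous.continuousOn
      hf.differentiableOn (fun s hs => ?_) hac Set.self_mem_Iic hac
    rw [interior_Iic] at hs
    exact nonpos_of_mul_nonneg_left (h s) (sub_neg.2 hs)

lemma abs_sub_le_abs_sub_of_monotone_add_sub {α : Type*} [LinearOrder α] {g h : α → ℝ}
    (hadd : Monotone fun z => g z + h z) (hsub : Monotone fun z => g z - h z) (a b : α) :
    |h b - h a| ≤ |g b - g a| := by
  wlog hab : a ≤ b generalizing a b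
  · rw [abs_sub_comm (h b), abs_sub_comm (g b)]
    exact this b a (le_of_not_ge hab)
  have h₁ := hadd hab
  have h₂ := hsub hab
  simp only at h₁ h₂
  exact (abs_sub_le_iff.2 ⟨by linarith, by linarith⟩).trans (le_abs_self _)

lemma min_sum_le_sum_min {ι : Type*} (s : Finset ι) {b : ℝ} (hb : 0 ≤ b) {q : ι → ℝ}
    (hq : ∀ i ∈ s, 0 ≤ q i) : min b (∑ i ∈ s, q i) ≤ ∑ i ∈ s, min b (q i) := by
  by_cases h : ∃ i ∈ s, b ≤ q i
  · obtain ⟨i, hi, hbi⟩ := h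
    calc min b (∑ i ∈ s, q i) ≤ min b (q i) := (min_le_left _ _).trans_eq (min_eq_left hbi).symm
      _ ≤ ∑ i ∈ s, min b (q i) :=
        Finset.single_le_sum (f := fun i => min b (q i)) (fun j hj => le_min hb (hq j hj)) hi
  · push Not at h
    exact (min_le_right _ _).trans_eq
      (Finset.sum_congr rfl fun i hi => (min_eq_right (h i hi).le).symm)

lemma sum_mul_sub_weighted_mean_eq_zero {ι : Type*} (s : Finset ι) {w : ι → ℝ}
    (hw : ∀ j ∈ s, 0 ≤ w j) (κ : ι → ℝ) :
    ∑ j ∈ s, w j * (κ j - (∑ k ∈ s, w k * κ k) / ∑ k ∈ s, w k) = 0 := by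
  have hmean : (∑ k ∈ s, w k * κ k) / (∑ k ∈ s, w k) * ∑ k ∈ s, w k = ∑ k ∈ s, w k * κ k := by
    refine div_mul_cancel_of_imp fun h0 => Finset.sum_eq_zero fun k hk => ?_
    rw [(Finset.sum_eq_zero_iff_of_nonneg hw).1 h0 k hk, zero_mul]
  simp only [mul_sub, Finset.sum_sub_distrib, ← Finset.sum_mul]
  rw [mul_comm, hmean, sub_self]

section Decay

variable {e e' : ℝ → ℝ} {a b k T : ℝ}

lemma le_mul_exp_of_deriv_le_neg_mul (he : ∀ s, T ≤ s → HasDerivAt e (e' s) s)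
    (hdecay : ∀ s, T ≤ s → e' s ≤ -k * e s) {t : ℝ} (ht : T ≤ t) :
    e t ≤ e T * exp (-k * (t - T)) := by
  have hderiv : ∀ r, T ≤ r → HasDerivAt (fun r => e r * exp (k * r))
      (e' r * exp (k * r) + e r * (exp (k * r) * (k * 1))) r := fun r hr =>
    (he r hr).mul ((hasDerivAt_id r).const_mul k).exp
  have hanti : AntitoneOn (fun r => e r * exp (k * r)) (Set.Ici T) := by
    refine antitoneOn_of_hasDerivWithinAt_nonpos (convex_Ici T)
      (fun r hr => (hderiv r hr).continuousAt.continuousWithinAt)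
      (fun r hr => (hderiv r (interior_subset hr)).hasDerivWithinAt) fun r hr => ?_
    have := hdecay r (interior_subset hr)
    have := exp_pos (k * r)
    nlinarith
  have := hanti Set.self_mem_Ici ht ht
  rw [← le_div_iff₀ (exp_pos _), mul_div_assoc, ← exp_sub] at this
  rwa [show k * T - k * t = -k * (t - T) by ring] at this

lemma le_div_of_mul_min_le_neg_deriv (ha : 0 < a) (hb : 0 < b) (hk : 0 < k)
    (he : ∀ s, 0 ≤ s → HasDerivAt e (e' s) s) (hnn : ∀ s, 0 ≤ s → 0 ≤ e s)
    (hdecay : ∀ s, 0 ≤ s → a * min b (k * e s) ≤ -e' s) {s : ℝ} (hs : e 0 / (a * b) ≤ s) :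
    e s ≤ b / k := by
  have hs0 : 0 ≤ s := (div_nonneg (hnn 0 le_rfl) (by positivity)).trans hs
  have hcont : ∀ {D : Set ℝ}, D ⊆ Set.Ici 0 → ContinuousOn e D := fun hD r hr =>
    (he r (hD hr)).continuousAt.continuousWithinAt
  have hanti : AntitoneOn e (Set.Ici 0) := by
    refine antitoneOn_of_hasDerivWithinAt_nonpos (convex_Ici 0) (hcont subset_rfl)
      (fun r hr => (he r (interior_subset hr)).hasDerivWithinAt) fun r hr => ?_
    have := hdecay r (interior_subset hr)
    nlinarith [le_min hb.le (mul_nonneg hk.le (hnn r (interior_subset hr)))]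
  by_contra! hlt
  -- Otherwise `e > b / k`, hence `e' ≤ -a b`, on all of `[0, s]`, so `e s ≤ e 0 - a b s ≤ 0`.
  have hslope : e s - e 0 ≤ -(a * b) * (s - 0) := by
    refine (convex_Icc 0 s).image_sub_le_mul_sub_of_deriv_le (hcont Set.Icc_subset_Ici_self)
      (fun r hr => (he r (interior_subset hr).1).differentiableAt.differentiableWithinAt)
      (fun r hr => ?_) 0 (Set.left_mem_Icc.2 hs0) s (Set.right_mem_Icc.2 hs0) hs0
    obtain ⟨hr0, hrs⟩ : r ∈ Set.Icc 0 s := interior_subset hr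
    have hbig : b ≤ k * e r := by
      have := hanti hr0 hs0 hrs
      rw [div_lt_iff₀ hk] at hlt
      nlinarith
    have := hdecay r hr0
    rw [min_eq_left hbig, (he r hr0).deriv] at *
    linarith
  have h0 : e 0 ≤ a * b * s := (div_le_iff₀' (by positivity)).1 hs
  have : 0 < b / k := by positivity
  linarith

lemma le_div_mul_exp_of_mul_min_le_neg_deriv (ha : 0 < a) (hb : 0 < b) (hk : 0 < k)
    (he : ∀ s, 0 ≤ s → HasDerivAt e (e' s) s) (hnn : ∀ s, 0 ≤ s → 0 ≤ e s)
    (hdecay : ∀ s, 0 ≤ s → a * min b (k * e s) ≤ -e' s) {t : ℝ} (hT : e 0 / (a * b) ≤ T)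
    (ht : T ≤ t) : e t ≤ b / k * exp (-(a * k) * (t - T)) := by
  have hT0 : 0 ≤ T := (div_nonneg (hnn 0 le_rfl) (by positivity)).trans hT
  have hbelow : ∀ s, T ≤ s → e s ≤ b / k := fun s hs =>
    le_div_of_mul_min_le_neg_deriv ha hb hk he hnn hdecay (hT.trans hs)
  refine le_trans (le_mul_exp_of_deriv_le_neg_mul (fun s hs => he s (hT0.trans hs))
    (fun s hs => ?_) ht) (mul_le_mul_of_nonneg_right (hbelow T le_rfl) (exp_pos _).le)
  have := hdecay s (hT0.trans hs)
  rw [min_eq_right ((le_div_iff₀' hk).1 (hbelow s hs))] at this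
  linarith

end Decay

section Activation

variable {φ : ℝ → ℝ} {ρ1 ρ2 β : ℝ}

lemma monotone_deriv_deriv_div_add_mul_inv_deriv (hφ : ContDiff ℝ 3 φ)
    (hψ : ∀ z, 0 < deriv φ z) (hβ : 0 < β)
    (hnormal : ∀ z, β * |deriv (deriv φ) z| ≤ deriv φ z ^ 2 * deriv (deriv (deriv φ)) z)
    {σ : ℝ} (hσ : |σ| ≤ 1) : Monotone fun z => deriv (deriv φ) z / β + σ * (deriv φ z)⁻¹ := by
  have hderiv : ∀ z, HasDerivAt (fun z => deriv (deriv φ) z / β + σ * (deriv φ z)⁻¹)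
      (deriv (deriv (deriv φ)) z / β + σ * (-deriv (deriv φ) z / deriv φ z ^ 2)) z := fun z =>
    ((hφ.deriv'.differentiable_deriv_two z).hasDerivAt.div_const β).add
      ((((hφ.of_le (by norm_num)).differentiable_deriv_two z).hasDerivAt.inv
        (hψ z).ne').const_mul σ)
  refine monotone_of_deriv_nonneg (fun z => (hderiv z).differentiableAt) fun z => ?_
  have hσκ : β * (σ * deriv (deriv φ) z) ≤ deriv φ z ^ 2 * deriv (deriv (deriv φ)) z := by
    refine le_trans ?_ (hnormal z)
    gcongr
    calc σ * deriv (deriv φ) z ≤ |σ| * |deriv (deriv φ) z| := (le_abs_self _).trans (abs_mul _ _).le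
      _ ≤ |deriv (deriv φ) z| := mul_le_of_le_one_left (abs_nonneg _) hσ
  have hψz := hψ z
  rw [(hderiv z).deriv,
    show deriv (deriv (deriv φ)) z / β + σ * (-deriv (deriv φ) z / deriv φ z ^ 2)
      = (deriv φ z ^ 2 * deriv (deriv (deriv φ)) z - β * (σ * deriv (deriv φ) z))
        / (β * deriv φ z ^ 2) by field_simp; ring]
  exact div_nonneg (by linarith) (by positivity)

lemma abs_inv_deriv_sub_inv_deriv_le (hφ : ContDiff ℝ 3 φ) (hψ : ∀ z, 0 < deriv φ z) (hβ : 0 < β)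
    (hnormal : ∀ z, β * |deriv (deriv φ) z| ≤ deriv φ z ^ 2 * deriv (deriv (deriv φ)) z)
    (a b : ℝ) :
    |(deriv φ b)⁻¹ - (deriv φ a)⁻¹| ≤ |deriv (deriv φ) b - deriv (deriv φ) a| / β := by
  have hplus := monotone_deriv_deriv_div_add_mul_inv_deriv hφ hψ hβ hnormal (σ := 1) (by simp)
  have hminus := monotone_deriv_deriv_div_add_mul_inv_deriv hφ hψ hβ hnormal (σ := -1) (by simp)
  simp only [one_mul, neg_one_mul, ← sub_eq_add_neg] at hplus hminus
  have := abs_sub_le_abs_sub_of_monotone_add_sub hplus hminus a b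
  rwa [← sub_div, abs_div, abs_of_pos hβ] at this

lemma deriv_le_two_mul_deriv (hφ : ContDiff ℝ 3 φ) (hψ : ∀ z, 0 < deriv φ z) (hβ : 0 < β)
    (hnormal : ∀ z, β * |deriv (deriv φ) z| ≤ deriv φ z ^ 2 * deriv (deriv (deriv φ)) z)
    {a s : ℝ} (h : 2 * deriv φ a * |deriv (deriv φ) s - deriv (deriv φ) a| ≤ β) :
    deriv φ s ≤ 2 * deriv φ a := by
  have ha := hψ a
  have hinv := (abs_sub_le_iff.1 (abs_inv_deriv_sub_inv_deriv_le hφ hψ hβ hnormal a s)).2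
  have hδ : |deriv (deriv φ) s - deriv (deriv φ) a| / β ≤ (2 * deriv φ a)⁻¹ := by
    rw [div_le_iff₀ hβ, inv_mul_eq_div, le_div_iff₀ (by positivity)]
    linarith
  have : (2 * deriv φ a)⁻¹ ≤ (deriv φ s)⁻¹ := by
    have hhalf : (deriv φ a)⁻¹ = 2 * (2 * deriv φ a)⁻¹ := by field_simp
    linarith
  exact (inv_le_inv₀ (by positivity) (hψ s)).1 this

def tiltedSqDeriv (φ : ℝ → ℝ) (c a : ℝ) : ℝ := deriv φ a ^ 2 - 2 * c * φ a

lemma hasDerivAt_tiltedSqDeriv (hφ : ContDiff ℝ 2 φ) (c a : ℝ) :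
    HasDerivAt (tiltedSqDeriv φ c) (2 * deriv φ a * (deriv (deriv φ) a - c)) a := by
  have h := ((hφ.differentiable_deriv_two a).hasDerivAt.pow 2).sub
    (((hφ.differentiable (by norm_num) a).hasDerivAt).const_mul (2 * c))
  refine h.congr_deriv ?_
  push_cast
  ring

lemma mul_sq_le_tiltedSqDeriv_sub (hφ : ContDiff ℝ 3 φ) (hρ1 : 0 ≤ ρ1) (hρ2 : 0 ≤ ρ2)
    (hφ' : ∀ z, ρ1 ≤ deriv φ z) (hφ''' : ∀ z, ρ2 ≤ deriv (deriv (deriv φ)) z) (ν a : ℝ) :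
    ρ1 * ρ2 * (a - ν) ^ 2 ≤
      tiltedSqDeriv φ (deriv (deriv φ) ν) a - tiltedSqDeriv φ (deriv (deriv φ) ν) ν := by
  set c := deriv (deriv φ) ν
  have hH : ∀ s, HasDerivAt (fun s => tiltedSqDeriv φ c s - ρ1 * ρ2 * (s - ν) ^ 2)
      (2 * deriv φ s * (deriv (deriv φ) s - c) - ρ1 * ρ2 * (2 * (s - ν))) s := fun s => by
    refine (hasDerivAt_tiltedSqDeriv (hφ.of_le (by norm_num)) c s).sub
      ((((hasDerivAt_id s).sub_const ν).pow 2).const_mul _ |>.congr_deriv ?_)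
    simp only [id]
    push_cast
    ring
  -- The tilted function minus the quadratic still decreases left of `ν` and increases right of it.
  have hmin := le_of_deriv_mul_sub_nonneg (fun s => (hH s).differentiableAt) (c := ν) (fun s => by
    have hκ := mul_sq_le_sub_mul_sub_of_le_deriv hφ.deriv'.differentiable_deriv_two hφ''' ν s
    have hX : 0 ≤ (deriv (deriv φ) s - c) * (s - ν) :=
      (by positivity : 0 ≤ ρ2 * (s - ν) ^ 2).trans hκ
    rw [(hH s).deriv]
    nlinarith [mul_le_mul_of_nonneg_right (hφ' s) hX, mul_le_mul_of_nonneg_left hκ hρ1]) a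
  simp only [sub_self, zero_pow two_ne_zero, mul_zero, sub_zero] at hmin
  linarith

lemma tiltedSqDeriv_sub_le (hφ : ContDiff ℝ 3 φ) (hψ : ∀ z, 0 < deriv φ z) (hρ2 : 0 < ρ2)
    (hφ''' : ∀ z, ρ2 ≤ deriv (deriv (deriv φ)) z) (hβ : 0 < β)
    (hnormal : ∀ z, β * |deriv (deriv φ) z| ≤ deriv φ z ^ 2 * deriv (deriv (deriv φ)) z)
    {c ac a : ℝ} (hac : deriv (deriv φ) ac = c)
    (hsmall : 2 * deriv φ a * |deriv (deriv φ) a - c| ≤ β) :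
    tiltedSqDeriv φ c a - tiltedSqDeriv φ c ac ≤
      4 * deriv φ a * (deriv (deriv φ) a - c) ^ 2 / ρ2 := by
  set δ := |deriv (deriv φ) a - c|
  have hκd : Differentiable ℝ (deriv (deriv φ)) := hφ.deriv'.differentiable_deriv_two
  have hκ : Monotone (deriv (deriv φ)) :=
    monotone_of_deriv_nonneg hκd fun z => hρ2.le.trans (hφ''' z)
  have hF : ∀ s, HasDerivAt (tiltedSqDeriv φ c) (2 * deriv φ s * (deriv (deriv φ) s - c)) s :=
    hasDerivAt_tiltedSqDeriv (hφ.of_le (by norm_num)) c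
  -- Between `ac` and `a`, `φ''` stays between `c` and `φ'' a`, so `φ'` at most doubles.
  have hslope : ∀ s ∈ Set.uIcc ac a, ‖deriv (tiltedSqDeriv φ c) s‖ ≤ 4 * deriv φ a * δ := by
    intro s hs
    have hκs : deriv (deriv φ) s ∈ Set.uIcc c (deriv (deriv φ) a) :=
      hac ▸ hκ.image_uIcc_subset (Set.mem_image_of_mem _ hs)
    have hψs : deriv φ s ≤ 2 * deriv φ a := by
      refine deriv_le_two_mul_deriv hφ hψ hβ hnormal (hsmall.trans' ?_)
      rw [abs_sub_comm]
      gcongr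
      · exact (mul_pos two_pos (hψ a)).le
      · exact Set.abs_sub_right_of_mem_uIcc hκs
    rw [(hF s).deriv, Real.norm_eq_abs, abs_mul, abs_of_pos (mul_pos two_pos (hψ s))]
    calc 2 * deriv φ s * |deriv (deriv φ) s - c| ≤ 2 * (2 * deriv φ a) * δ := by
          gcongr
          · linarith [hψ a]
          · exact Set.abs_sub_left_of_mem_uIcc hκs
      _ = 4 * deriv φ a * δ := by ring
  have hFa := (convex_uIcc ac a).norm_image_sub_le_of_norm_deriv_le
    (fun s _ => (hF s).differentiableAt) hslope Set.left_mem_uIcc Set.right_mem_uIcc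
  have hgap : ρ2 * |a - ac| ≤ δ := by
    simpa only [hac] using mul_abs_sub_le_abs_sub_of_le_deriv hκd hφ''' ac a
  rw [Real.norm_eq_abs, Real.norm_eq_abs] at hFa
  have hψa := hψ a
  calc tiltedSqDeriv φ c a - tiltedSqDeriv φ c ac ≤ 4 * deriv φ a * δ * |a - ac| :=
        (le_abs_self _).trans hFa
    _ ≤ 4 * deriv φ a * δ * (δ / ρ2) := by
        gcongr
        rwa [le_div_iff₀ hρ2, mul_comm]
    _ = 4 * deriv φ a * (deriv (deriv φ) a - c) ^ 2 / ρ2 := by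
        rw [← sq_abs (deriv (deriv φ) a - c)]
        ring

lemma mul_tiltedSqDeriv_sub_le_sq (hφ : ContDiff ℝ 3 φ) (hρ1 : 0 < ρ1)
    (hφ' : ∀ z, ρ1 ≤ deriv φ z) (hρ2 : 0 < ρ2) (hφ''' : ∀ z, ρ2 ≤ deriv (deriv (deriv φ)) z)
    (hβ : 0 < β)
    (hnormal : ∀ z, β * |deriv (deriv φ) z| ≤ deriv φ z ^ 2 * deriv (deriv (deriv φ)) z)
    {c a : ℝ} (ν : ℝ) (hsmall : 2 * deriv φ a * |deriv (deriv φ) a - c| ≤ β) :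
    ρ1 * ρ2 * (tiltedSqDeriv φ c a - tiltedSqDeriv φ c ν) ≤
      (2 * deriv φ a * (deriv (deriv φ) a - c)) ^ 2 := by
  have hψ : ∀ z, 0 < deriv φ z := fun z => hρ1.trans_le (hφ' z)
  obtain ⟨ac, hac⟩ := surjective_of_pos_le_deriv hφ.deriv'.differentiable_deriv_two hρ2 hφ''' c
  have hmin : tiltedSqDeriv φ c ac ≤ tiltedSqDeriv φ c ν := by
    have := mul_sq_le_tiltedSqDeriv_sub hφ le_rfl le_rfl (fun z => (hψ z).le)
      (fun z => hρ2.le.trans (hφ''' z)) ac ν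
    rw [hac] at this
    linarith
  have hub := tiltedSqDeriv_sub_le hφ hψ hρ2 hφ''' hβ hnormal hac hsmall
  have hψa := hψ a
  calc ρ1 * ρ2 * (tiltedSqDeriv φ c a - tiltedSqDeriv φ c ν)
      ≤ ρ1 * ρ2 * (4 * deriv φ a * (deriv (deriv φ) a - c) ^ 2 / ρ2) := by
        gcongr
        linarith
    _ = ρ1 * (4 * deriv φ a * (deriv (deriv φ) a - c) ^ 2) := by field_simp
    _ ≤ deriv φ a * (4 * deriv φ a * (deriv (deriv φ) a - c) ^ 2) := by gcongr; exact hφ' a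
    _ = (2 * deriv φ a * (deriv (deriv φ) a - c)) ^ 2 := by ring

end Activation

section Excess

variable {φ : ℝ → ℝ} {ρ1 ρ2 β : ℝ} {m : ℕ} {a : Fin m → ℝ} {ν : ℝ}

-- The contribution of one data point to `G - G⋆`, where `G⋆ = ∑ i, m φ'(ν i)²` is the value of
-- `G` at the optimum.
def sqDerivExcess (φ : ℝ → ℝ) (a : Fin m → ℝ) (ν : ℝ) : ℝ :=
  ∑ j, deriv φ (a j) ^ 2 - m * deriv φ ν ^ 2

lemma sqDerivExcess_eq_sum_tiltedSqDeriv_sub (hcon : ∑ j, φ (a j) = m * φ ν) (c : ℝ) :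
    sqDerivExcess φ a ν = ∑ j, (tiltedSqDeriv φ c (a j) - tiltedSqDeriv φ c ν) := by
  simp only [sqDerivExcess, tiltedSqDeriv, Finset.sum_sub_distrib, ← Finset.mul_sum, hcon,
    Finset.sum_const, Finset.card_univ, Fintype.card_fin, nsmul_eq_mul]
  ring

lemma mul_sq_le_sqDerivExcess (hφ : ContDiff ℝ 3 φ) (hρ1 : 0 ≤ ρ1) (hρ2 : 0 ≤ ρ2)
    (hφ' : ∀ z, ρ1 ≤ deriv φ z) (hφ''' : ∀ z, ρ2 ≤ deriv (deriv (deriv φ)) z)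
    (hcon : ∑ j, φ (a j) = m * φ ν) (J : Fin m) :
    ρ1 * ρ2 * (a J - ν) ^ 2 ≤ sqDerivExcess φ a ν := by
  have hterm := fun j => mul_sq_le_tiltedSqDeriv_sub hφ hρ1 hρ2 hφ' hφ''' ν (a j)
  rw [sqDerivExcess_eq_sum_tiltedSqDeriv_sub hcon (deriv (deriv φ) ν)]
  exact (hterm J).trans <| Finset.single_le_sum
    (fun j _ => (by positivity : 0 ≤ ρ1 * ρ2 * (a j - ν) ^ 2).trans (hterm j)) (Finset.mem_univ J)

lemma sqDerivExcess_nonneg (hφ : ContDiff ℝ 3 φ) (hψ : ∀ z, 0 ≤ deriv φ z)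
    (hκ : ∀ z, 0 ≤ deriv (deriv (deriv φ)) z) (hcon : ∑ j, φ (a j) = m * φ ν) :
    0 ≤ sqDerivExcess φ a ν := by
  rw [sqDerivExcess_eq_sum_tiltedSqDeriv_sub hcon (deriv (deriv φ) ν)]
  refine Finset.sum_nonneg fun j _ => ?_
  simpa using mul_sq_le_tiltedSqDeriv_sub hφ le_rfl le_rfl hψ hκ ν (a j)

lemma min_sq_mul_sqDerivExcess_le (hφ : ContDiff ℝ 3 φ) (hρ1 : 0 < ρ1)
    (hφ' : ∀ z, ρ1 ≤ deriv φ z) (hρ2 : 0 < ρ2) (hφ''' : ∀ z, ρ2 ≤ deriv (deriv (deriv φ)) z)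
    (hβ : 0 < β)
    (hnormal : ∀ z, β * |deriv (deriv φ) z| ≤ deriv φ z ^ 2 * deriv (deriv (deriv φ)) z)
    (hcon : ∑ j, φ (a j) = m * φ ν) (c : ℝ) :
    min (β ^ 2) (ρ1 * ρ2 * sqDerivExcess φ a ν) ≤
      ∑ j, (2 * deriv φ (a j) * (deriv (deriv φ) (a j) - c)) ^ 2 := by
  by_cases hbig : β ^ 2 ≤ ∑ j, (2 * deriv φ (a j) * (deriv (deriv φ) (a j) - c)) ^ 2
  · exact (min_le_left _ _).trans hbig
  refine (min_le_right _ _).trans ?_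
  rw [sqDerivExcess_eq_sum_tiltedSqDeriv_sub hcon c, Finset.mul_sum]
  refine Finset.sum_le_sum fun j _ =>
    mul_tiltedSqDeriv_sub_le_sq hφ hρ1 hφ' hρ2 hφ''' hβ hnormal ν ?_
  have hj : (2 * deriv φ (a j) * (deriv (deriv φ) (a j) - c)) ^ 2 ≤ β ^ 2 :=
    (Finset.single_le_sum (f := fun j => (2 * deriv φ (a j) * (deriv (deriv φ) (a j) - c)) ^ 2)
      (fun _ _ => sq_nonneg _) (Finset.mem_univ j)).trans (not_le.1 hbig).le
  have := abs_le_of_sq_le_sq hj hβ.le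
  rwa [abs_mul, abs_of_pos (mul_pos two_pos (hρ1.trans_le (hφ' (a j))))] at this

end Excess

section Coherence

variable {E ι : Type*} [NormedAddCommGroup E] [InnerProductSpace ℝ E] [Fintype ι]

lemma mul_inner_le_norm_sq {g w : E} {μ : ℝ} (hμ : 0 < μ) (hw : μ * ‖w‖ ^ 2 ≤ ⟪g, w⟫) :
    μ * ⟪g, w⟫ ≤ ‖g‖ ^ 2 := by
  have hS : 0 ≤ ⟪g, w⟫ := (by positivity : 0 ≤ μ * ‖w‖ ^ 2).trans hw
  rcases hS.eq_or_lt with h0 | hpos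
  · rw [← h0, mul_zero]
    positivity
  have hcs : ⟪g, w⟫ ^ 2 ≤ ‖g‖ ^ 2 * ‖w‖ ^ 2 := by
    rw [← mul_pow]
    exact pow_le_pow_left₀ hS (real_inner_le_norm g w) 2
  refine le_of_mul_le_mul_right ?_ hpos
  nlinarith [mul_le_mul_of_nonneg_left hw (sq_nonneg ‖g‖)]

lemma exists_inner_eq_of_coherent {x : ι → E} {μ : ℝ} (hμ : 0 < μ)
    (hcoh : ∀ c : ι → ℝ, μ * ∑ i, c i ^ 2 ≤ ‖∑ i, c i • x i‖ ^ 2) (p : ι → ℝ) :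
    ∃ v : E, (∀ i, ⟪x i, v⟫ = p i) ∧ μ * ‖v‖ ^ 2 ≤ ∑ i, p i ^ 2 := by
  let gram : (ι → ℝ) →ₗ[ℝ] (ι → ℝ) :=
    (LinearMap.pi fun i => (innerSL ℝ (x i)).toLinearMap) ∘ₗ Fintype.linearCombination ℝ x
  have hgram : ∀ c i, gram c i = ⟪x i, ∑ k, c k • x k⟫ := fun c i => by
    simp [gram, Fintype.linearCombination_apply, inner_sum, real_inner_smul_right]
  have hnorm : ∀ c : ι → ℝ, ‖∑ k, c k • x k‖ ^ 2 = ∑ k, c k * gram c k := fun c => by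
    rw [← real_inner_self_eq_norm_sq, sum_inner]
    simp [hgram, real_inner_smul_left]
  have hinj : Function.Injective gram := by
    rw [← LinearMap.ker_eq_bot, LinearMap.ker_eq_bot']
    intro c hc
    have hsq : ∑ i, c i ^ 2 = 0 := by
      have := hcoh c
      rw [hnorm, hc] at this
      simp only [Pi.zero_apply, mul_zero, Finset.sum_const_zero] at this
      exact le_antisymm (nonpos_of_mul_nonpos_right this hμ) (by positivity)
    ext i
    simpa using (Finset.sum_eq_zero_iff_of_nonneg fun i _ => sq_nonneg (c i)).1 hsq i
  obtain ⟨q, hq⟩ := LinearMap.injective_iff_surjective.1 hinj p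
  refine ⟨∑ k, q k • x k, fun i => by rw [← hgram, hq], ?_⟩
  have hv : ‖∑ k, q k • x k‖ ^ 2 = ∑ k, q k * p k := by rw [hnorm, hq]
  have hcs := Finset.sum_mul_sq_le_sq_mul_sq Finset.univ q p
  have hq2 := hcoh q
  rw [← hv] at hcs
  rcases (sq_nonneg ‖∑ k, q k • x k‖).eq_or_lt with h0 | hpos
  · rw [← h0, mul_zero]
    positivity
  · refine le_of_mul_le_mul_right ?_ hpos
    have hP : 0 ≤ ∑ i, p i ^ 2 := Finset.sum_nonneg fun i _ => sq_nonneg (p i)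
    nlinarith [mul_le_mul_of_nonneg_right hq2 hP, mul_le_mul_of_nonneg_left hcs hμ.le]

end Coherence

section Gradient

variable {n m d : ℕ} {φ : ℝ → ℝ} {x : Fin n → EuclideanSpace ℝ (Fin d)}

lemma inner_gradF (i : Fin n) (θ w : Param m d) :
    ⟪gradF φ x i θ, w⟫ = ∑ j, deriv φ ⟪θ j, x i⟫ * ⟪x i, w j⟫ := by
  rw [PiLp.inner_apply]
  simp only [gradF, WithLp.ofLp_toLp, real_inner_smul_left]

lemma inner_gradRegG (θ w : Param m d) :
    ⟪gradRegG φ x θ, w⟫ =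
      ∑ i, ∑ j, 2 * deriv φ ⟪θ j, x i⟫ * deriv (deriv φ) ⟪θ j, x i⟫ * ⟪x i, w j⟫ := by
  rw [PiLp.inner_apply, Finset.sum_comm]
  simp only [gradRegG, WithLp.ofLp_toLp, sum_inner, real_inner_smul_left]

lemma rgradG_mem_ker (θ : Param m d) : rgradG φ x θ ∈ LinearMap.ker (jacobian φ x θ) :=
  Submodule.coe_mem _

lemma inner_rgradG_of_mem_ker {θ w : Param m d} (hw : w ∈ LinearMap.ker (jacobian φ x θ)) :
    ⟪rgradG φ x θ, w⟫ = ⟪gradRegG φ x θ, w⟫ := by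
  have := (LinearMap.ker (jacobian φ x θ)).inner_starProjection_left_eq_right (gradRegG φ x θ) w
  rwa [Submodule.starProjection_eq_self_iff.2 hw] at this

lemma inner_gradRegG_rgradG (θ : Param m d) :
    ⟪gradRegG φ x θ, rgradG φ x θ⟫ = ‖rgradG φ x θ‖ ^ 2 := by
  rw [← inner_rgradG_of_mem_ker (rgradG_mem_ker θ), real_inner_self_eq_norm_sq]

lemma hasDerivAt_regG_comp (hφ : ContDiff ℝ 2 φ) {γ : ℝ → Param m d} {v : Param m d} {t : ℝ}
    (hγ : HasDerivAt γ v t) : HasDerivAt (fun s => regG φ x (γ s)) ⟪gradRegG φ x (γ t), v⟫ t := by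
  have hcoord : ∀ i j, HasDerivAt (fun s => ⟪γ s j, x i⟫) ⟪x i, v j⟫ t := fun i j => by
    simpa [real_inner_comm] using
      ((PiLp.proj 2 (fun _ : Fin m => EuclideanSpace ℝ (Fin d)) j).hasFDerivAt.comp_hasDerivAt t
        hγ).inner ℝ (hasDerivAt_const t (x i))
  rw [inner_gradRegG]
  refine HasDerivAt.fun_sum fun i _ => HasDerivAt.fun_sum fun j _ => ?_
  refine (((hφ.differentiable_deriv_two _).hasDerivAt.comp t (hcoord i j)).pow 2).congr_deriv ?_
  simp only [Function.comp_apply]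
  push_cast
  ring

lemma mul_sum_sq_le_norm_rgradG_sq {μ : ℝ} (hμ : 0 < μ)
    (hcoh : ∀ c : Fin n → ℝ, μ * ∑ i, c i ^ 2 ≤ ‖∑ i, c i • x i‖ ^ 2) (θ : Param m d)
    (c : Fin n → ℝ)
    (hc : ∀ i, ∑ j, deriv φ ⟪θ j, x i⟫ ^ 2 * (deriv (deriv φ) ⟪θ j, x i⟫ - c i) = 0) :
    μ * ∑ i, ∑ j, (2 * deriv φ ⟪θ j, x i⟫ * (deriv (deriv φ) ⟪θ j, x i⟫ - c i)) ^ 2 ≤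
      ‖rgradG φ x θ‖ ^ 2 := by
  set p : Fin n → Fin m → ℝ := fun i j =>
    2 * deriv φ ⟪θ j, x i⟫ * (deriv (deriv φ) ⟪θ j, x i⟫ - c i)
  have hp : ∀ i, ∑ j, deriv φ ⟪θ j, x i⟫ * p i j = 0 := fun i => by
    calc ∑ j, deriv φ ⟪θ j, x i⟫ * p i j
        = 2 * ∑ j, deriv φ ⟪θ j, x i⟫ ^ 2 * (deriv (deriv φ) ⟪θ j, x i⟫ - c i) := by
          rw [Finset.mul_sum]
          exact Finset.sum_congr rfl fun j _ => by ring
      _ = 0 := by rw [hc i, mul_zero]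
  -- A tangent test vector whose blocks `w j` have inner products `p i j` with the data.
  choose v hv hvnorm using fun j => exists_inner_eq_of_coherent hμ hcoh (fun i => p i j)
  let w : Param m d := WithLp.toLp 2 v
  have hker : w ∈ LinearMap.ker (jacobian φ x θ) := by
    ext i
    simp only [jacobian, LinearMap.pi_apply, ContinuousLinearMap.coe_coe, innerSL_apply_apply,
      inner_gradF, w, hv, Pi.zero_apply]
    exact hp i
  have hinner : ⟪rgradG φ x θ, w⟫ = ∑ i, ∑ j, p i j ^ 2 := by
    rw [inner_rgradG_of_mem_ker hker, inner_gradRegG]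
    refine Finset.sum_congr rfl fun i _ => ?_
    simp only [w, hv]
    rw [← add_zero (∑ j, p i j ^ 2), ← mul_zero (2 * c i), ← hp i, Finset.mul_sum,
      ← Finset.sum_add_distrib]
    exact Finset.sum_congr rfl fun j _ => by ring
  have hw : μ * ‖w‖ ^ 2 ≤ ∑ i, ∑ j, p i j ^ 2 := by
    rw [PiLp.norm_sq_eq_of_L2, Finset.mul_sum, Finset.sum_comm]
    exact Finset.sum_le_sum fun j _ => hvnorm j
  rw [← hinner] at hw ⊢
  exact mul_inner_le_norm_sq hμ hw

def regGExcess (φ : ℝ → ℝ) (x : Fin n → EuclideanSpace ℝ (Fin d)) (ν : Fin n → ℝ)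
    (θ : Param m d) : ℝ :=
  ∑ i, sqDerivExcess φ (fun j => ⟪θ j, x i⟫) (ν i)

lemma regGExcess_eq (ν : Fin n → ℝ) (θ : Param m d) :
    regGExcess φ x ν θ = regG φ x θ - ∑ i, (m : ℝ) * deriv φ (ν i) ^ 2 := by
  simp only [regGExcess, regG, sqDerivExcess, Finset.sum_sub_distrib]

lemma regGExcess_nonneg {ν : Fin n → ℝ} {θ : Param m d} (hφ : ContDiff ℝ 3 φ)
    (hψ : ∀ z, 0 ≤ deriv φ z) (hκ : ∀ z, 0 ≤ deriv (deriv (deriv φ)) z)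
    (hzero : ∀ i, ∑ j, φ ⟪θ j, x i⟫ = m * φ (ν i)) : 0 ≤ regGExcess φ x ν θ :=
  Finset.sum_nonneg fun i _ => sqDerivExcess_nonneg hφ hψ hκ (hzero i)

lemma mul_sq_le_regGExcess {ρ1 ρ2 : ℝ} {ν : Fin n → ℝ} {θ : Param m d} (hφ : ContDiff ℝ 3 φ)
    (hρ1 : 0 ≤ ρ1) (hρ2 : 0 ≤ ρ2) (hφ' : ∀ z, ρ1 ≤ deriv φ z)
    (hφ''' : ∀ z, ρ2 ≤ deriv (deriv (deriv φ)) z)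
    (hzero : ∀ i, ∑ j, φ ⟪θ j, x i⟫ = m * φ (ν i)) (i : Fin n) (j : Fin m) :
    ρ1 * ρ2 * (⟪θ j, x i⟫ - ν i) ^ 2 ≤ regGExcess φ x ν θ :=
  (mul_sq_le_sqDerivExcess hφ hρ1 hρ2 hφ' hφ''' (hzero i) j).trans <|
    Finset.single_le_sum (f := fun i => sqDerivExcess φ (fun j => ⟪θ j, x i⟫) (ν i))
      (fun i _ => sqDerivExcess_nonneg hφ (fun z => hρ1.trans (hφ' z))
        (fun z => hρ2.trans (hφ''' z)) (hzero i)) (Finset.mem_univ i)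

lemma hasDerivAt_regGExcess_of_hasDerivAt_neg_rgradG (hφ : ContDiff ℝ 2 φ) (ν : Fin n → ℝ)
    {θt : ℝ → Param m d} {t : ℝ} (hflow : HasDerivAt θt (-rgradG φ x (θt t)) t) :
    HasDerivAt (fun s => regGExcess φ x ν (θt s)) (-‖rgradG φ x (θt t)‖ ^ 2) t := by
  simpa only [regGExcess_eq, inner_neg_right, inner_gradRegG_rgradG] using
    (hasDerivAt_regG_comp (x := x) hφ hflow).sub_const _

lemma mul_min_le_norm_rgradG_sq {μ ρ1 ρ2 β : ℝ} {ν : Fin n → ℝ} (hμ : 0 < μ)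
    (hcoh : ∀ c : Fin n → ℝ, μ * ∑ i, c i ^ 2 ≤ ‖∑ i, c i • x i‖ ^ 2)
    (hφ : ContDiff ℝ 3 φ) (hρ1 : 0 < ρ1) (hφ' : ∀ z, ρ1 ≤ deriv φ z) (hρ2 : 0 < ρ2)
    (hφ''' : ∀ z, ρ2 ≤ deriv (deriv (deriv φ)) z) (hβ : 0 < β)
    (hnormal : ∀ z, β * |deriv (deriv φ) z| ≤ deriv φ z ^ 2 * deriv (deriv (deriv φ)) z)
    (θ : Param m d) (hzero : ∀ i, ∑ j, φ ⟪θ j, x i⟫ = m * φ (ν i)) :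
    μ * min (β ^ 2) (ρ1 * ρ2 * regGExcess φ x ν θ) ≤ ‖rgradG φ x θ‖ ^ 2 := by
  -- Tilt each data point by the `φ'²`-weighted mean of `φ''`, which keeps the test vector tangent.
  let c : Fin n → ℝ := fun i =>
    (∑ j, deriv φ ⟪θ j, x i⟫ ^ 2 * deriv (deriv φ) ⟪θ j, x i⟫) / ∑ j, deriv φ ⟪θ j, x i⟫ ^ 2
  refine le_trans ?_ (mul_sum_sq_le_norm_rgradG_sq hμ hcoh θ c fun i =>
    sum_mul_sub_weighted_mean_eq_zero _ (fun j _ => sq_nonneg _) _)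
  gcongr
  rw [regGExcess, Finset.mul_sum]
  refine (min_sum_le_sum_min _ (sq_nonneg β) fun i _ => ?_).trans
    (Finset.sum_le_sum fun i _ =>
      min_sq_mul_sqDerivExcess_le hφ hρ1 hφ' hρ2 hφ''' hβ hnormal (hzero i) (c i))
  exact mul_nonneg (mul_pos hρ1 hρ2).le (sqDerivExcess_nonneg hφ
    (fun z => (hρ1.trans_le (hφ' z)).le) (fun z => hρ2.le.trans (hφ''' z)) (hzero i))

end Gradient

lemma div_mul_exp_neg_le_mul_sq {a b k ε τ : ℝ} (hb : 0 < b) (hk : 0 < k) (hε : 0 < ε)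
    (hτ : log (max (b / (k ^ 2 * ε ^ 2)) 1) ≤ a * k * τ) :
    b / k * exp (-(a * k) * τ) ≤ k * ε ^ 2 := by
  set C := b / (k ^ 2 * ε ^ 2)
  have hM : 0 < max C 1 := lt_max_of_lt_right one_pos
  calc b / k * exp (-(a * k) * τ) ≤ b / k * exp (-log (max C 1)) := by gcongr; linarith
    _ = b / k / max C 1 := by rw [exp_neg, exp_log hM, ← div_eq_mul_inv]
    _ ≤ b / k / C := by gcongr; exact le_max_left _ _
    _ = k * ε ^ 2 := by
        simp only [C]
        field_simp

theorem stmt_16_general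
    (n m d : ℕ)
    (x : Fin n → EuclideanSpace ℝ (Fin d))
    (μ : ℝ) (hμ : 0 < μ)
    (hcoh : ∀ c : Fin n → ℝ, μ * ∑ i, (c i) ^ 2 ≤ ‖∑ i, c i • x i‖ ^ 2)
    (y : Fin n → ℝ)
    (φ : ℝ → ℝ) (hφ : ContDiff ℝ (⊤ : ℕ∞) φ)
    (ρ1 ρ2 : ℝ) (hρ1 : 0 < ρ1) (hρ2 : 0 < ρ2)
    (hφ' : ∀ z, ρ1 ≤ deriv φ z)
    (hφ''' : ∀ z, ρ2 ≤ deriv (deriv (deriv φ)) z)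
    (β : ℝ) (hβ : 0 < β)
    (hnormal : ∀ z, β * |deriv (deriv φ) z| ≤ (deriv φ z) ^ 2 * deriv (deriv (deriv φ)) z)
    (θt : ℝ → Param m d)
    (hmem : ∀ t, 0 ≤ t → ∀ i, netF φ x i (θt t) = y i)
    (hflow : ∀ t, 0 ≤ t → HasDerivAt θt (-(rgradG φ x (θt t))) t)
    (ν : Fin n → ℝ) (hν : ∀ i, φ (ν i) = y i / (m : ℝ)) :
    ∀ ε : ℝ, 0 < ε → ∀ t : ℝ,
      regG φ x (θt 0) / (μ * β ^ 2)
          + Real.log (max (β ^ 2 / (ρ1 ^ 2 * ρ2 ^ 2 * ε ^ 2)) 1) / (ρ1 * ρ2 * μ) ≤ t →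
      ∀ i j, |⟪θt t j, x i⟫ - ν i| ≤ ε := by
  intro ε hε t ht i j
  have hφ3 : ContDiff ℝ 3 φ := hφ.of_le (WithTop.coe_le_coe.2 le_top)
  have hψ : ∀ z, 0 ≤ deriv φ z := fun z => hρ1.le.trans (hφ' z)
  have hκ : ∀ z, 0 ≤ deriv (deriv (deriv φ)) z := fun z => hρ2.le.trans (hφ''' z)
  have hzero : ∀ s, 0 ≤ s → ∀ i, ∑ j, φ ⟪θt s j, x i⟫ = m * φ (ν i) := fun s hs i => by
    rw [hν, mul_div_cancel₀ _ (Nat.cast_ne_zero.2 j.pos.ne'), ← hmem s hs i, netF]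
  set T := regG φ x (θt 0) / (μ * β ^ 2)
  have hT : regGExcess φ x ν (θt 0) / (μ * β ^ 2) ≤ T := by
    rw [regGExcess_eq]
    exact div_le_div_of_nonneg_right (sub_le_self _ (by positivity)) (by positivity)
  have hτ : log (max (β ^ 2 / ((ρ1 * ρ2) ^ 2 * ε ^ 2)) 1) ≤ μ * (ρ1 * ρ2) * (t - T) := by
    rw [mul_pow, ← div_le_iff₀' (by positivity), mul_comm μ]
    linarith
  have hTt : T ≤ t :=
    (le_add_of_nonneg_right (div_nonneg (log_nonneg (le_max_right _ _)) (by positivity))).trans ht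
  have ht0 : 0 ≤ t :=
    ((div_nonneg (regGExcess_nonneg hφ3 hψ hκ (hzero 0 le_rfl)) (by positivity)).trans hT).trans hTt
  have hclose : ρ1 * ρ2 * (⟪θt t j, x i⟫ - ν i) ^ 2 ≤ ρ1 * ρ2 * ε ^ 2 :=
    calc ρ1 * ρ2 * (⟪θt t j, x i⟫ - ν i) ^ 2 ≤ regGExcess φ x ν (θt t) :=
          mul_sq_le_regGExcess hφ3 hρ1.le hρ2.le hφ' hφ''' (hzero t ht0) i j
      _ ≤ β ^ 2 / (ρ1 * ρ2) * exp (-(μ * (ρ1 * ρ2)) * (t - T)) := by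
          refine le_div_mul_exp_of_mul_min_le_neg_deriv hμ (pow_pos hβ 2) (mul_pos hρ1 hρ2)
            (fun s hs => hasDerivAt_regGExcess_of_hasDerivAt_neg_rgradG
              (hφ3.of_le (by norm_num)) ν (hflow s hs))
            (fun s hs => regGExcess_nonneg hφ3 hψ hκ (hzero s hs)) (fun s hs => ?_) hT hTt
          rw [neg_neg]
          exact mul_min_le_norm_rgradG_sq hμ hcoh hφ3 hρ1 hφ' hρ2 hφ''' hβ hnormal _ (hzero s hs)
      _ ≤ ρ1 * ρ2 * ε ^ 2 := div_mul_exp_neg_le_mul_sq (pow_pos hβ 2) (mul_pos hρ1 hρ2) hε hτ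
  exact abs_le_of_sq_le_sq (le_of_mul_le_mul_left hclose (mul_pos hρ1 hρ2)) hε.le

/-- after time G(θ(0))/(μβ²) + log(max(β²/(ρ1²ρ2²ε²),1))/(ρ1ρ2μ), every
neuron's pre-activation along the flow is ε-close to the optimum ν_i = φ⁻¹(y_i/m). -/
theorem stmt_16
    (n m d : ℕ) (hn : 1 ≤ n) (hm : 1 ≤ m) (hd : 1 ≤ d)
    (x : Fin n → EuclideanSpace ℝ (Fin d)) (hx : ∀ i, ‖x i‖ = 1)
    (μ : ℝ) (hμ : 0 < μ)
    (hcoh : ∀ c : Fin n → ℝ, μ * ∑ i, (c i) ^ 2 ≤ ‖∑ i, c i • x i‖ ^ 2)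
    (y : Fin n → ℝ)
    (φ : ℝ → ℝ) (hφ : ContDiff ℝ (⊤ : ℕ∞) φ)
    (ρ1 ρ2 : ℝ) (hρ1 : 0 < ρ1) (hρ2 : 0 < ρ2)
    (hφ' : ∀ z, ρ1 ≤ deriv φ z)
    (hφ''' : ∀ z, ρ2 ≤ deriv (deriv (deriv φ)) z)
    (β : ℝ) (hβ : 0 < β)
    (hnormal : ∀ z, β * |deriv (deriv φ) z| ≤ (deriv φ z) ^ 2 * deriv (deriv (deriv φ)) z)
    (θt : ℝ → Param m d)
    (hmem : ∀ t, 0 ≤ t → ∀ i, netF φ x i (θt t) = y i)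
    (hflow : ∀ t, 0 ≤ t → HasDerivAt θt (-(rgradG φ x (θt t))) t)
    (ν : Fin n → ℝ) (hν : ∀ i, φ (ν i) = y i / (m : ℝ)) :
    ∀ ε : ℝ, 0 < ε → ∀ t : ℝ,
      regG φ x (θt 0) / (μ * β ^ 2)
          + Real.log (max (β ^ 2 / (ρ1 ^ 2 * ρ2 ^ 2 * ε ^ 2)) 1) / (ρ1 * ρ2 * μ) ≤ t →
      ∀ i j, |⟪θt t j, x i⟫ - ν i| ≤ ε :=
  stmt_16_general n m d x μ hμ hcoh y φ hφ ρ1 ρ2 hρ1 hρ2 hφ' hφ''' β hβ hnormal θt hmem hflow ν hν
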